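/- arXiv:1006.5518 — 3 statements merged into one kernel-verified Lean document; each statement's English description precedes it below -/
import Mathlib

section
/- Let (x(t), y(t)) be a differentiable solution of the system (P): dx/dt = f(x) + g(x)|y|², dy/dt = h(x)y + γ e^{iαt} a(βt). Define y₁(t) = y(t) + i (γ/α) e^{iαt} a(βt). Then the pair (x(t), y₁(t)) solves the transformed system dx/dt = f(x) + g(x)|y₁|² + (γ²/α²) g(x) |a(βt)|² − (2γ/α) g(x) Im{ y₁ e^{−iαt} \overline{a(βt)} }, dy₁/dt = h(x) y₁ − i (γ/α) e^{iαt} ( h(x) a(βt) − β a'(βt) ). -/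
/-! Since `|e^{iαt}| = 1`, expanding `|y|² = |y₁ - i (γ/α) e^{iαt} a(βt)|²` turns the `x`-equation
into the transformed one. Differentiating the correction term `i (γ/α) e^{iαt} a(βt)` produces
`-γ e^{iαt} a(βt) + i (γ/α) β e^{iαt} a'(βt)`, whose first part cancels the forcing in the
`y`-equation. -/

open Real Set Complex ComplexConjugate

lemma Complex.norm_sub_I_mul_ofReal_mul_sq (w u : ℂ) (c : ℝ) :
    ‖w - I * c * u‖ ^ 2 = ‖w‖ ^ 2 + c ^ 2 * ‖u‖ ^ 2 - 2 * c * (w * conj u).im := by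
  simp only [← normSq_eq_norm_sq, normSq_apply, sub_re, sub_im, mul_re, mul_im, I_re, I_im,
    ofReal_re, ofReal_im, conj_re, conj_im]
  ring

lemma Complex.exp_neg_I_mul_ofReal (θ : ℝ) : exp (-(I * θ)) = conj (exp (I * θ)) := by
  rw [← exp_conj, map_mul, conj_I, conj_ofReal, neg_mul]

lemma hasDerivAt_exp_I_mul_mul_comp (α β t : ℝ) {a : ℝ → ℂ} {a' : ℂ}
    (ha : HasDerivAt a a' (β * t)) :
    HasDerivAt (fun s : ℝ => exp (I * ((α * s : ℝ) : ℂ)) * a (β * s))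
      (exp (I * ((α * t : ℝ) : ℂ)) * (I * α * a (β * t) + β * a')) t := by
  have hphase : HasDerivAt (fun s : ℝ => I * ((α * s : ℝ) : ℂ)) (I * α) t := by
    simpa using ((hasDerivAt_id t).const_mul α).ofReal_comp.const_mul I
  have hinner : HasDerivAt (fun s : ℝ => a (β * s)) (β • a') t :=
    ha.scomp t ((hasDerivAt_id t).const_mul β |>.congr_deriv (mul_one β))
  refine (hphase.cexp.mul hinner).congr_deriv ?_
  rw [real_smul]; ring

theorem first_averaging_transformation_general
    (n : ℕ)
    (f g : (Fin n → ℝ) → Fin n → ℝ) (h : (Fin n → ℝ) → ℂ)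
    (a a' : ℝ → ℂ)
    (ha : ∀ s : ℝ, HasDerivAt a (a' s) s)
    (α β γ : ℝ) (hα : 0 < α)
    (x : ℝ → Fin n → ℝ) (y : ℝ → ℂ)
    (hx : ∀ t : ℝ, HasDerivAt x
      (f (x t) + ‖y t‖ ^ 2 • g (x t)) t)
    (hy : ∀ t : ℝ, HasDerivAt y
      (h (x t) * y t + (γ : ℂ) * Complex.exp (Complex.I * ((α * t : ℝ) : ℂ)) * a (β * t)) t) :
    (∀ t : ℝ, HasDerivAt x
      (f (x t)
        + ‖y t + Complex.I * ((γ / α : ℝ) : ℂ)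
            * Complex.exp (Complex.I * ((α * t : ℝ) : ℂ)) * a (β * t)‖ ^ 2 • g (x t)
        + (γ ^ 2 / α ^ 2 * ‖a (β * t)‖ ^ 2) • g (x t)
        - (2 * γ / α *
            ((y t + Complex.I * ((γ / α : ℝ) : ℂ)
                * Complex.exp (Complex.I * ((α * t : ℝ) : ℂ)) * a (β * t))
              * Complex.exp (-(Complex.I * ((α * t : ℝ) : ℂ)))
              * (starRingEnd ℂ) (a (β * t))).im) • g (x t)) t) ∧
    (∀ t : ℝ, HasDerivAt
      (fun s : ℝ => y s + Complex.I * ((γ / α : ℝ) : ℂ)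
          * Complex.exp (Complex.I * ((α * s : ℝ) : ℂ)) * a (β * s))
      (h (x t) * (y t + Complex.I * ((γ / α : ℝ) : ℂ)
            * Complex.exp (Complex.I * ((α * t : ℝ) : ℂ)) * a (β * t))
        - Complex.I * ((γ / α : ℝ) : ℂ) * Complex.exp (Complex.I * ((α * t : ℝ) : ℂ))
            * (h (x t) * a (β * t) - (β : ℂ) * a' (β * t))) t) := by
  have hγα : ((γ / α : ℝ) : ℂ) * α = γ := by exact_mod_cast div_mul_cancel₀ γ hα.ne'
  refine ⟨fun t => ?_, fun t => ?_⟩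
  · rw [exp_neg_I_mul_ofReal]
    set E := exp (I * ((α * t : ℝ) : ℂ))
    set y₁ := y t + I * ((γ / α : ℝ) : ℂ) * E * a (β * t)
    have hnorm := norm_sub_I_mul_ofReal_mul_sq y₁ (E * a (β * t)) (γ / α)
    rw [show y₁ - I * ((γ / α : ℝ) : ℂ) * (E * a (β * t)) = y t by simp only [y₁]; ring,
      norm_mul, norm_exp_I_mul_ofReal, one_mul, map_mul, ← mul_assoc] at hnorm
    convert hx t using 2
    rw [hnorm]
    module
  · have hcorrection := (hasDerivAt_exp_I_mul_mul_comp α β t (ha (β * t))).const_mul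
      (I * ((γ / α : ℝ) : ℂ))
    refine ((hy t).add hcorrection).congr_of_eventuallyEq (.of_forall fun s => ?_)
      |>.congr_deriv ?_
    · simp only [Pi.add_apply, mul_assoc]
    · linear_combination
        (exp (I * ((α * t : ℝ) : ℂ)) * a (β * t)) * (I_sq * ((γ / α : ℝ) : ℂ) * α - hγα)

/-- If `(x(t), y(t))` solves the forced system (P), then
`y₁(t) = y(t) + i (γ/α) e^{iαt} a(βt)` together with `x(t)` solves the averaged system
obtained by the first averaging transformation. -/
theorem first_averaging_transformation
    (n : ℕ)
    (f g : (Fin n → ℝ) → Fin n → ℝ) (h : (Fin n → ℝ) → ℂ)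
    (hf : Continuous f) (hg : Continuous g) (hh : Continuous h)
    (a a' : ℝ → ℂ)
    (ha : ∀ s : ℝ, HasDerivAt a (a' s) s)
    (haper : Function.Periodic a (2 * π))
    (α β γ : ℝ) (hα : 0 < α) (hβ : 0 < β) (hγ : 0 ≤ γ)
    (x : ℝ → Fin n → ℝ) (y : ℝ → ℂ)
    (hx : ∀ t : ℝ, HasDerivAt x
      (f (x t) + ‖y t‖ ^ 2 • g (x t)) t)
    (hy : ∀ t : ℝ, HasDerivAt y
      (h (x t) * y t + (γ : ℂ) * Complex.exp (Complex.I * ((α * t : ℝ) : ℂ)) * a (β * t)) t) :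
    (∀ t : ℝ, HasDerivAt x
      (f (x t)
        + ‖y t + Complex.I * ((γ / α : ℝ) : ℂ)
            * Complex.exp (Complex.I * ((α * t : ℝ) : ℂ)) * a (β * t)‖ ^ 2 • g (x t)
        + (γ ^ 2 / α ^ 2 * ‖a (β * t)‖ ^ 2) • g (x t)
        - (2 * γ / α *
            ((y t + Complex.I * ((γ / α : ℝ) : ℂ)
                * Complex.exp (Complex.I * ((α * t : ℝ) : ℂ)) * a (β * t))
              * Complex.exp (-(Complex.I * ((α * t : ℝ) : ℂ)))
              * (starRingEnd ℂ) (a (β * t))).im) • g (x t)) t) ∧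
    (∀ t : ℝ, HasDerivAt
      (fun s : ℝ => y s + Complex.I * ((γ / α : ℝ) : ℂ)
          * Complex.exp (Complex.I * ((α * s : ℝ) : ℂ)) * a (β * s))
      (h (x t) * (y t + Complex.I * ((γ / α : ℝ) : ℂ)
            * Complex.exp (Complex.I * ((α * t : ℝ) : ℂ)) * a (β * t))
        - Complex.I * ((γ / α : ℝ) : ℂ) * Complex.exp (Complex.I * ((α * t : ℝ) : ℂ))
            * (h (x t) * a (β * t) - (β : ℂ) * a' (β * t))) t) :=
  first_averaging_transformation_general n f g h a a' ha α β γ hα x y hx hy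
end

section
/- Suppose f, g : ℝⁿ → ℝⁿ and h : ℝⁿ → ℂ are C¹, α₀ > 0 and β₀ > 0 are constants, and x₀ : ℝ → ℝⁿ, y₀ : ℝ → ℂ are C¹ and 2π-periodic such that x(t) = x₀(β₀ t), y(t) = y₀(β₀ t) e^{iα₀ t} solves the system dx/dt = f(x) + g(x)|y|², dy/dt = h(x)y. For ψ ∈ ℝ let M(ψ) be the (n+2)×2 real matrix with columns (x₀'(ψ), Re y₀'(ψ), Im y₀'(ψ)) and (0, −Im y₀(ψ), Re y₀(ψ)). If M(ψ*) has rank 2 for some ψ* ∈ ℝ, then M(ψ) has rank 2 for every ψ ∈ ℝ. -/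
/-!
With `c(x) = (h(x) - iα₀)/β₀`, the profile equations read `β₀ x₀' = f(x₀) + |y₀|² g(x₀)` and
`y₀' = c(x₀) y₀`, and `M(ψ)` has rank 2 iff `y₀(ψ) ≠ 0` and `(x₀'(ψ), Re h(x₀(ψ))) ≠ 0`.
Both conditions propagate by uniqueness for ODEs: `y₀` solves a linear equation, so it vanishes
nowhere or everywhere; and by phase invariance `(x₀, |y₀|²)` solves an autonomous `C¹` system,
whose equilibria are exactly the points where `x₀' = 0` and `Re h(x₀) = 0`, so a degenerate `ψ`
forces `x₀` to be constant.
-/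

open Real Set Filter Topology Complex

theorem ODE_solution_eq_of_equilibrium {E : Type*} [NormedAddCommGroup E] [NormedSpace ℝ E]
    {v : ℝ → E → E} {p : ℝ → E} {x : E} {U : Set E} (hU : U ∈ 𝓝 x) (hvx : ∀ t, v t x = 0)
    (hv : ∀ t, ∃ K, ∀ᶠ s in 𝓝 t, LipschitzOnWith K (v s) U)
    (hp : ∀ t, HasDerivAt p (v t (p t)) t) {t₀ : ℝ} (ht₀ : p t₀ = x) :
    p = fun _ => x := by
  have hcont : Continuous p := continuous_iff_continuousAt.2 fun t => (hp t).continuousAt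
  have hopen : IsOpen {t | p t = x} := by
    refine isOpen_iff_mem_nhds.2 fun t (ht : p t = x) => ?_
    obtain ⟨K, hK⟩ := hv t
    have hpU : ∀ᶠ s in 𝓝 t, p s ∈ U := hcont.continuousAt.preimage_mem_nhds (ht ▸ hU)
    refine ODE_solution_unique_of_eventually (g := fun _ => x) hK
      ((Eventually.of_forall hp).and hpU) (Eventually.of_forall fun s => ⟨?_, mem_of_mem_nhds hU⟩)
      ht
    simpa [hvx] using hasDerivAt_const s x
  have hclopen : IsClopen {t | p t = x} := ⟨isClosed_eq hcont continuous_const, hopen⟩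
  funext t
  exact (hclopen.eq_univ ⟨t₀, ht₀⟩).superset (mem_univ t)

theorem ODE_linear_solution_eq_zero {E : Type*} [NormedAddCommGroup E] [NormedSpace ℝ E]
    {A : ℝ → E →L[ℝ] E} (hA : Continuous A) {y : ℝ → E} (hy : ∀ t, HasDerivAt y (A t (y t)) t)
    {t₀ : ℝ} (ht₀ : y t₀ = 0) : y = 0 := by
  refine ODE_solution_eq_of_equilibrium univ_mem (fun t => map_zero (A t)) (fun t => ?_) hy ht₀
  refine ⟨‖A t‖₊ + 1, ?_⟩
  filter_upwards [(continuous_nnnorm.comp hA).continuousAt.eventually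
    (gt_mem_nhds (lt_add_one ‖A t‖₊))] with s hs
  exact ((A s).lipschitz.weaken hs.le).lipschitzOnWith

theorem HasDerivAt.norm_sq_of_mul {y : ℝ → ℂ} {c : ℂ} {t : ℝ} (hy : HasDerivAt y (c * y t) t) :
    HasDerivAt (‖y ·‖ ^ 2) (2 * c.re * ‖y t‖ ^ 2) t := by
  convert hy.norm_sq using 1
  rw [Complex.inner, mul_assoc c, mul_conj, normSq_eq_norm_sq, re_mul_ofReal]
  ring

theorem eq_const_of_amplitude_equilibrium {E : Type*} [NormedAddCommGroup E] [NormedSpace ℝ E]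
    {F : E × ℝ → E} {c : E → ℂ} (hF : ContDiff ℝ 1 F) (hc : ContDiff ℝ 1 c)
    {x : ℝ → E} {y : ℝ → ℂ} (hx : ∀ t, HasDerivAt x (F (x t, ‖y t‖ ^ 2)) t)
    (hy : ∀ t, HasDerivAt y (c (x t) * y t) t) {t₀ : ℝ} (hF₀ : F (x t₀, ‖y t₀‖ ^ 2) = 0)
    (hc₀ : (c (x t₀)).re = 0) :
    x = fun _ => x t₀ := by
  set G : E × ℝ → E × ℝ := fun q => (F q, 2 * (c q.1).re * q.2)
  have hG : ContDiff ℝ 1 G :=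
    hF.prodMk ((contDiff_const.mul (reCLM.contDiff.comp (hc.comp contDiff_fst))).mul contDiff_snd)
  obtain ⟨K, U, hU, hK⟩ := hG.contDiffAt.exists_lipschitzOnWith (x := (x t₀, ‖y t₀‖ ^ 2))
  have hp := ODE_solution_eq_of_equilibrium (v := fun _ => G) hU
    (fun _ => by simp [G, hF₀, hc₀]) (fun _ => ⟨K, Eventually.of_forall fun _ => hK⟩)
    (fun t => (hx t).prodMk (hy t).norm_sq_of_mul) rfl
  exact funext fun t => congrArg Prod.fst (congrFun hp t)

theorem HasDerivAt.of_comp_const_mul {E : Type*} [NormedAddCommGroup E] [NormedSpace ℝ E]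
    {u w : ℝ → E} {β : ℝ} (hβ : β ≠ 0)
    (hu : ∀ t, HasDerivAt (fun s => u (β * s)) (w (β * t)) t) (ψ : ℝ) :
    HasDerivAt u (β⁻¹ • w ψ) ψ := by
  have := (hu (β⁻¹ * ψ)).scomp ψ ((hasDerivAt_id ψ).const_mul β⁻¹)
  simpa [Function.comp_def, mul_inv_cancel_left₀ hβ] using this

theorem HasDerivAt.of_mul_exp_I_mul {Y : ℝ → ℂ} {a : ℂ} {α t : ℝ}
    (h : HasDerivAt (fun s : ℝ => Y s * Complex.exp (I * ((α * s : ℝ) : ℂ)))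
      (a * (Y t * Complex.exp (I * ((α * t : ℝ) : ℂ)))) t) :
    HasDerivAt Y ((a - I * α) * Y t) t := by
  have hphase : HasDerivAt (fun s : ℝ => Complex.exp (-(I * ((α * s : ℝ) : ℂ))))
      (-(I * α) * Complex.exp (-(I * ((α * t : ℝ) : ℂ)))) t := by
    have := (((hasDerivAt_id t).const_mul α).ofReal_comp.const_mul I).neg.cexp
    simpa [mul_comm] using this
  have hcancel (s : ℝ) :
      Complex.exp (I * ((α * s : ℝ) : ℂ)) * Complex.exp (-(I * ((α * s : ℝ) : ℂ))) = 1 := by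
    rw [← Complex.exp_add, add_neg_cancel, Complex.exp_zero]
  refine ((h.mul hphase).congr_of_eventuallyEq (Eventually.of_forall fun s => ?_)).congr_deriv ?_
  · simp only [Pi.mul_apply]
    rw [mul_assoc, hcancel, mul_one]
  · linear_combination (a - I * α) * Y t * hcancel t

theorem linearIndependent_pair_mul_iff {E : Type*} [AddCommGroup E] [Module ℝ E]
    (u : E) (c z : ℂ) :
    LinearIndependent ℝ
      ![((u, (c * z).re, (c * z).im) : E × ℝ × ℝ), ((0, -z.im, z.re) : E × ℝ × ℝ)] ↔
      z ≠ 0 ∧ (u ≠ 0 ∨ c.re ≠ 0) := by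
  have key (a b : ℝ) :
      a • ((u, (c * z).re, (c * z).im) : E × ℝ × ℝ) + b • (0, -z.im, z.re) = 0 ↔
        a • u = 0 ∧ (a * c + b * I) * z = 0 := by
    simp only [Prod.ext_iff, Complex.ext_iff]
    simp only [Prod.fst_add, Prod.smul_fst, smul_zero, add_zero, Prod.fst_zero, Prod.snd_add,
      Prod.smul_snd, smul_eq_mul, Prod.snd_zero, mul_re, mul_im, add_re, add_im, ofReal_re,
      ofReal_im, I_re, I_im, zero_re, zero_im]
    refine and_congr_right fun _ => ?_
    constructor <;> rintro ⟨h₁, h₂⟩ <;> constructor <;> linarith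
  simp only [LinearIndependent.pair_iff, key]
  constructor
  · intro h
    refine ⟨fun hz => by simpa using (h 0 1 (by simp [hz])).2, ?_⟩
    by_contra! hdeg
    have hc : c = c.im * I := Complex.ext (by simp [hdeg.2]) (by simp)
    exact one_ne_zero (h 1 (-c.im) ⟨by simp [hdeg.1], by rw [hc]; simp⟩).1
  · rintro ⟨hz, hdeg⟩ a b ⟨hau, habz⟩
    have hab : a * c + b * I = 0 := (mul_eq_zero.1 habz).resolve_right hz
    have hre : a * c.re = 0 := by simpa using congrArg re hab
    have him : a * c.im + b = 0 := by simpa using congrArg im hab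
    have ha : a = 0 := by
      rcases hdeg with hu | hc
      · exact (smul_eq_zero.1 hau).resolve_right hu
      · exact (mul_eq_zero.1 hre).resolve_right hc
    exact ⟨ha, by simpa [ha] using him⟩

theorem rank_condition_propagates_general
    (n : ℕ)
    (f g : (Fin n → ℝ) → Fin n → ℝ) (h : (Fin n → ℝ) → ℂ)
    (hf : ContDiff ℝ 1 f) (hg : ContDiff ℝ 1 g) (hh : ContDiff ℝ 1 h)
    (α₀ β₀ : ℝ) (hβ₀ : 0 < β₀)
    (x₀ : ℝ → Fin n → ℝ) (y₀ : ℝ → ℂ)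
    (x₀' : ℝ → Fin n → ℝ) (y₀' : ℝ → ℂ)
    (hx₀' : ∀ ψ : ℝ, HasDerivAt x₀ (x₀' ψ) ψ)
    (hy₀' : ∀ ψ : ℝ, HasDerivAt y₀ (y₀' ψ) ψ)
    (hsolx : ∀ t : ℝ, HasDerivAt (fun s : ℝ => x₀ (β₀ * s))
      (f (x₀ (β₀ * t)) + ‖y₀ (β₀ * t)‖ ^ 2 • g (x₀ (β₀ * t))) t)
    (hsoly : ∀ t : ℝ, HasDerivAt
      (fun s : ℝ => y₀ (β₀ * s) * Complex.exp (Complex.I * ((α₀ * s : ℝ) : ℂ)))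
      (h (x₀ (β₀ * t)) * (y₀ (β₀ * t) * Complex.exp (Complex.I * ((α₀ * t : ℝ) : ℂ)))) t)
    (ψstar : ℝ)
    (hrank : LinearIndependent ℝ
      ![((x₀' ψstar, (y₀' ψstar).re, (y₀' ψstar).im) : (Fin n → ℝ) × ℝ × ℝ),
        ((0, -(y₀ ψstar).im, (y₀ ψstar).re) : (Fin n → ℝ) × ℝ × ℝ)]) :
    ∀ ψ : ℝ, LinearIndependent ℝ
      ![((x₀' ψ, (y₀' ψ).re, (y₀' ψ).im) : (Fin n → ℝ) × ℝ × ℝ),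
        ((0, -(y₀ ψ).im, (y₀ ψ).re) : (Fin n → ℝ) × ℝ × ℝ)] := by
  have hβ : β₀ ≠ 0 := hβ₀.ne'
  set c : (Fin n → ℝ) → ℂ := fun x => β₀⁻¹ * (h x - I * α₀)
  have hc : ContDiff ℝ 1 c := contDiff_const.mul (hh.sub contDiff_const)
  have hx (ψ : ℝ) : HasDerivAt x₀ (β₀⁻¹ • (f (x₀ ψ) + ‖y₀ ψ‖ ^ 2 • g (x₀ ψ))) ψ :=
    HasDerivAt.of_comp_const_mul (w := fun ψ => f (x₀ ψ) + ‖y₀ ψ‖ ^ 2 • g (x₀ ψ)) hβ hsolx ψ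
  have hy (ψ : ℝ) : HasDerivAt y₀ (c (x₀ ψ) * y₀ ψ) ψ := by
    simpa [c, Complex.real_smul, mul_assoc] using
      HasDerivAt.of_comp_const_mul (w := fun ψ => (h (x₀ ψ) - I * α₀) * y₀ ψ) hβ
        (fun t => (hsoly t).of_mul_exp_I_mul) ψ
  have hrank_iff (ψ : ℝ) : LinearIndependent ℝ
      ![((x₀' ψ, (y₀' ψ).re, (y₀' ψ).im) : (Fin n → ℝ) × ℝ × ℝ),
        ((0, -(y₀ ψ).im, (y₀ ψ).re) : (Fin n → ℝ) × ℝ × ℝ)] ↔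
      y₀ ψ ≠ 0 ∧ (x₀' ψ ≠ 0 ∨ (h (x₀ ψ)).re ≠ 0) := by
    rw [(hy₀' ψ).unique (hy ψ), linearIndependent_pair_mul_iff]
    simp [c, hβ]
  obtain ⟨hy₀_star, hnondeg_star⟩ := (hrank_iff ψstar).1 hrank
  have hy₀_ne (ψ : ℝ) : y₀ ψ ≠ 0 := fun hψ => hy₀_star <| by
    have hcont : Continuous fun ψ => ContinuousLinearMap.mul ℝ ℂ (c (x₀ ψ)) :=
      (ContinuousLinearMap.mul ℝ ℂ).continuous.comp <| hc.continuous.comp <|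
        continuous_iff_continuousAt.2 fun ψ => (hx₀' ψ).continuousAt
    rw [ODE_linear_solution_eq_zero hcont (fun t => by simpa using hy t) hψ]
    rfl
  intro ψ
  refine (hrank_iff ψ).2 ⟨hy₀_ne ψ, ?_⟩
  by_contra! hdeg
  have hF : ContDiff ℝ 1 fun q : (Fin n → ℝ) × ℝ => β₀⁻¹ • (f q.1 + q.2 • g q.1) :=
    ((hf.comp contDiff_fst).add (contDiff_snd.smul (hg.comp contDiff_fst))).const_smul _
  have hconst := eq_const_of_amplitude_equilibrium hF hc hx hy (t₀ := ψ)
    (by rw [← (hx₀' ψ).unique (hx ψ), hdeg.1]) (by simp [c, hdeg.2])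
  have hx₀'_star : x₀' ψstar = 0 := by
    have := hx₀' ψstar
    rw [hconst] at this
    exact this.unique (hasDerivAt_const _ _)
  exact hnondeg_star.elim (· hx₀'_star) (· (by rw [congrFun hconst ψstar]; exact hdeg.2))

/-- For a modulated-wave solution of the unperturbed system, the rank-2
condition on the matrix `M(ψ)` (whose columns are `(x₀'(ψ), Re y₀'(ψ), Im y₀'(ψ))` and
`(0, −Im y₀(ψ), Re y₀(ψ))`, rank 2 being expressed as linear independence of the two
columns) holds for every `ψ` as soon as it holds for one `ψ*`. -/
theorem rank_condition_propagates
    (n : ℕ)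
    (f g : (Fin n → ℝ) → Fin n → ℝ) (h : (Fin n → ℝ) → ℂ)
    (hf : ContDiff ℝ 1 f) (hg : ContDiff ℝ 1 g) (hh : ContDiff ℝ 1 h)
    (α₀ β₀ : ℝ) (hα₀ : 0 < α₀) (hβ₀ : 0 < β₀)
    (x₀ : ℝ → Fin n → ℝ) (y₀ : ℝ → ℂ)
    (hx₀ : ContDiff ℝ 1 x₀) (hy₀ : ContDiff ℝ 1 y₀)
    (hx₀per : Function.Periodic x₀ (2 * π)) (hy₀per : Function.Periodic y₀ (2 * π))
    (x₀' : ℝ → Fin n → ℝ) (y₀' : ℝ → ℂ)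
    (hx₀' : ∀ ψ : ℝ, HasDerivAt x₀ (x₀' ψ) ψ)
    (hy₀' : ∀ ψ : ℝ, HasDerivAt y₀ (y₀' ψ) ψ)
    (hsolx : ∀ t : ℝ, HasDerivAt (fun s : ℝ => x₀ (β₀ * s))
      (f (x₀ (β₀ * t)) + ‖y₀ (β₀ * t)‖ ^ 2 • g (x₀ (β₀ * t))) t)
    (hsoly : ∀ t : ℝ, HasDerivAt
      (fun s : ℝ => y₀ (β₀ * s) * Complex.exp (Complex.I * ((α₀ * s : ℝ) : ℂ)))
      (h (x₀ (β₀ * t)) * (y₀ (β₀ * t) * Complex.exp (Complex.I * ((α₀ * t : ℝ) : ℂ)))) t)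
    (ψstar : ℝ)
    (hrank : LinearIndependent ℝ
      ![((x₀' ψstar, (y₀' ψstar).re, (y₀' ψstar).im) : (Fin n → ℝ) × ℝ × ℝ),
        ((0, -(y₀ ψstar).im, (y₀ ψstar).re) : (Fin n → ℝ) × ℝ × ℝ)]) :
    ∀ ψ : ℝ, LinearIndependent ℝ
      ![((x₀' ψ, (y₀' ψ).re, (y₀' ψ).im) : (Fin n → ℝ) × ℝ × ℝ),
        ((0, -(y₀ ψ).im, (y₀ ψ).re) : (Fin n → ℝ) × ℝ × ℝ)] :=
  rank_condition_propagates_general n f g h hf hg hh α₀ β₀ hβ₀ x₀ y₀ x₀' y₀' hx₀' hy₀' hsolx hsoly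
    ψstar hrank
end

section
/- Let A : ℝ → M_m(ℝ) be continuous and T-periodic (T > 0). Suppose the linear system dz/dt = A(t) z has a nonzero T-periodic solution q, and the monodromy matrix of this system over one period T has eigenvalue 1 with algebraic multiplicity one. Then the adjoint system dp/dt = −A(t)ᵀ p has a T-periodic solution p satisfying p(t)ᵀ q(t) = 1 for all t ∈ ℝ. -/
/-!
Write `M = Ω(T)`. Every solution of `z' = A z` is `Ω(t) z(0)`, and `Ω` is invertible and
satisfies `Ω(t + T) = Ω(t) M`, so `q(0)` is a fixed vector of `M` and `p(t) = Ω(t)⁻ᵀ w` solves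
the adjoint system for every `w`, with `p(t) ⬝ q(t) = w ⬝ q(0)` constant. Such a `p` is
`T`-periodic exactly when `Mᵀ w = w`. Since `1` is a simple root of the characteristic polynomial
`χ = (X - 1) g` with `g(1) ≠ 0`, the rows of `g(M)` are left fixed vectors of `M`, and
`g(M) q(0) = g(1) q(0) ≠ 0`, so some left fixed vector `w` has `w ⬝ q(0) ≠ 0`; rescale it.
-/

open Set Topology Polynomial
open scoped Matrix

section LinearODE

variable {E : Type*} [NormedAddCommGroup E] [NormedSpace ℝ E]

/-- The coincidence set is clopen: closed by continuity, open by local uniqueness, since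
`‖A s‖` is locally bounded. -/
theorem ODE_solution_unique_of_linear {A : ℝ → E →L[ℝ] E} (hA : Continuous A) {f g : ℝ → E}
    (hf : ∀ t, HasDerivAt f (A t (f t)) t) (hg : ∀ t, HasDerivAt g (A t (g t)) t) {t₀ : ℝ}
    (h : f t₀ = g t₀) : f = g := by
  have hopen : IsOpen {t | f t = g t} := isOpen_iff_mem_nhds.2 fun t ht => by
    have hlip : ∀ᶠ s in 𝓝 t, LipschitzOnWith (‖A t‖₊ + 1) (A s) univ :=
      (hA.nnnorm.continuousAt.eventually (gt_mem_nhds (lt_add_one _))).mono fun s hs =>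
        ((A s).lipschitz.weaken hs.le).lipschitzOnWith
    exact ODE_solution_unique_of_eventually hlip (.of_forall fun s => ⟨hf s, trivial⟩)
      (.of_forall fun s => ⟨hg s, trivial⟩) ht
  have hclosed : IsClosed {t | f t = g t} :=
    isClosed_eq (continuous_iff_continuousAt.2 fun t => (hf t).continuousAt)
      (continuous_iff_continuousAt.2 fun t => (hg t).continuousAt)
  have hall := IsClopen.eq_univ ⟨hclosed, hopen⟩ ⟨t₀, h⟩
  exact funext fun t => (hall.symm ▸ mem_univ t : t ∈ {t | f t = g t})

end LinearODE

namespace Matrix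

variable {n : Type*} [Fintype n]

theorem ODE_solution_unique [DecidableEq n] {A : ℝ → Matrix n n ℝ} (hA : Continuous A)
    {f g : ℝ → n → ℝ} (hf : ∀ t, HasDerivAt f (A t *ᵥ f t) t)
    (hg : ∀ t, HasDerivAt g (A t *ᵥ g t) t) {t₀ : ℝ} (h : f t₀ = g t₀) : f = g :=
  let toCLM := LinearMap.toContinuousLinearMap.toLinearMap ∘ₗ Matrix.toLin'.toLinearMap
  ODE_solution_unique_of_linear (A := fun t => toCLM (A t))
    (toCLM.continuous_of_finiteDimensional.comp hA) (by exact hf) (by exact hg) h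

theorem hasDerivAt_mulVec {Ω : ℝ → Matrix n n ℝ} {B : Matrix n n ℝ} {t : ℝ}
    (hΩ : ∀ i j, HasDerivAt (fun s => Ω s i j) (B i j) t) (v : n → ℝ) :
    HasDerivAt (fun s => Ω s *ᵥ v) (B *ᵥ v) t :=
  hasDerivAt_pi.2 fun i => HasDerivAt.fun_sum fun j _ => (hΩ i j).mul_const (v j)

section Inverse

attribute [local instance] Matrix.linftyOpNormedRing Matrix.linftyOpNormedAlgebra

variable [DecidableEq n]

theorem hasDerivAt_iff_entries {f : ℝ → Matrix n n ℝ} {f' : Matrix n n ℝ} {t : ℝ} :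
    HasDerivAt f f' t ↔ ∀ i j, HasDerivAt (fun s => f s i j) (f' i j) t := by
  let e := (Matrix.ofLinearEquiv ℝ : (n → n → ℝ) ≃ₗ[ℝ] Matrix n n ℝ).toContinuousLinearEquiv
  constructor
  · intro h i j
    exact hasDerivAt_pi.1 (hasDerivAt_pi.1 (e.symm.hasFDerivAt.comp_hasDerivAt t h) i) j
  · intro h
    exact e.hasFDerivAt.comp_hasDerivAt t (hasDerivAt_pi.2 fun i => hasDerivAt_pi.2 (h i))

theorem hasDerivAt_inv {Ω : ℝ → Matrix n n ℝ} {B : Matrix n n ℝ} {t : ℝ}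
    (hΩ : ∀ i j, HasDerivAt (fun s => Ω s i j) (B i j) t) (hdet : IsUnit (Ω t).det) (i j : n) :
    HasDerivAt (fun s => (Ω s)⁻¹ i j) ((-(Ω t)⁻¹ * B * (Ω t)⁻¹) i j) t := by
  obtain ⟨u, hu⟩ := (Matrix.isUnit_iff_isUnit_det _).2 hdet
  have hinv := hasFDerivAt_ringInverse (𝕜 := ℝ) u
  rw [hu] at hinv
  have h := hinv.comp_hasDerivAt t (hasDerivAt_iff_entries.2 hΩ)
  simp only [Function.comp_def, ← Matrix.nonsing_inv_eq_ringInverse, _root_.neg_apply,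
    ContinuousLinearMap.mulLeftRight_apply, Matrix.coe_units_inv, hu, ← neg_mul] at h
  exact hasDerivAt_iff_entries.1 h i j

end Inverse

variable [DecidableEq n] {K : Type*} [Field K]

theorem inv_mulVec_eq_self {M : Matrix n n K} (hM : IsUnit M.det) {v : n → K}
    (hv : M *ᵥ v = v) : M⁻¹ *ᵥ v = v := by
  conv_lhs => rw [← hv]
  rw [mulVec_mulVec, nonsing_inv_mul _ hM, one_mulVec]

theorem inv_transpose_mulVec_dotProduct_mulVec {M : Matrix n n K} (hM : IsUnit M.det)
    (w v : n → K) : M⁻¹ᵀ *ᵥ w ⬝ᵥ M *ᵥ v = w ⬝ᵥ v := by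
  rw [mulVec_transpose, ← dotProduct_mulVec, mulVec_mulVec, nonsing_inv_mul _ hM, one_mulVec]

theorem aeval_mulVec_of_mulVec_eq_smul {M : Matrix n n K} {μ : K} {v : n → K}
    (hv : M *ᵥ v = μ • v) (p : K[X]) : aeval M p *ᵥ v = p.eval μ • v := by
  have h := Module.End.aeval_apply_of_mem_apply_eq_smul (f := Matrix.toLinAlgEquiv' M) (p := p) hv
  rwa [aeval_algHom_apply] at h

theorem exists_transpose_mulVec_eq_smul_and_dotProduct_eq_one {M : Matrix n n K} {μ : K}
    {v : n → K} (hv : M *ᵥ v = μ • v) (hv0 : v ≠ 0) (hμ : M.charpoly.rootMultiplicity μ = 1) :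
    ∃ w, Mᵀ *ᵥ w = μ • w ∧ w ⬝ᵥ v = 1 := by
  have hfactor := pow_mul_divByMonic_rootMultiplicity_eq M.charpoly μ
  have hgμ := eval_divByMonic_pow_rootMultiplicity_ne_zero μ M.charpoly_monic.ne_zero
  rw [hμ, pow_one] at hfactor hgμ
  set G := aeval M (M.charpoly /ₘ (X - C μ))
  have hGM : G * M = μ • G := by
    have h := Matrix.aeval_self_charpoly M
    rwa [← hfactor, mul_comm, map_mul, map_sub, aeval_X, aeval_C, mul_sub, sub_eq_zero,
      Algebra.algebraMap_eq_smul_one, mul_smul_one] at h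
  have hGv : G *ᵥ v ≠ 0 := by
    rw [aeval_mulVec_of_mulVec_eq_smul hv]
    exact smul_ne_zero hgμ hv0
  obtain ⟨u, hu⟩ : ∃ u, u ⬝ᵥ G *ᵥ v ≠ 0 := by
    simpa only [not_forall, dotProduct_comm] using mt dotProduct_eq_zero_iff.1 hGv
  refine ⟨(u ⬝ᵥ G *ᵥ v)⁻¹ • (Gᵀ *ᵥ u), ?_, ?_⟩
  · rw [mulVec_smul, mulVec_mulVec, ← transpose_mul, hGM, transpose_smul, smul_mulVec,
      smul_comm]
  · rw [smul_dotProduct, mulVec_transpose, ← dotProduct_mulVec, smul_eq_mul, inv_mul_cancel₀ hu]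

end Matrix

section FundamentalMatrix

variable {n : Type*} [Fintype n] {A Ω : ℝ → Matrix n n ℝ}

theorem hasDerivAt_fundamental_mulVec
    (hΩ : ∀ t i j, HasDerivAt (fun s => Ω s i j) ((A t * Ω t) i j) t) (v : n → ℝ) (t : ℝ) :
    HasDerivAt (fun s => Ω s *ᵥ v) (A t *ᵥ (Ω t *ᵥ v)) t := by
  simpa only [Matrix.mulVec_mulVec] using Matrix.hasDerivAt_mulVec (hΩ t) v

variable [DecidableEq n] (hA : Continuous A) (hΩ0 : Ω 0 = 1)
  (hΩ : ∀ t i j, HasDerivAt (fun s => Ω s i j) ((A t * Ω t) i j) t)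
include hA hΩ0 hΩ

theorem eq_fundamental_mulVec {x : ℝ → n → ℝ} (hx : ∀ t, HasDerivAt x (A t *ᵥ x t) t) (t : ℝ) :
    x t = Ω t *ᵥ x 0 :=
  congrFun (Matrix.ODE_solution_unique hA hx (hasDerivAt_fundamental_mulVec hΩ (x 0))
    (t₀ := 0) (by rw [hΩ0, Matrix.one_mulVec])) t

theorem isUnit_det_fundamental (t : ℝ) : IsUnit (Ω t).det := by
  rw [isUnit_iff_ne_zero]
  intro hdet
  obtain ⟨v, hv0, hΩv⟩ := Matrix.exists_mulVec_eq_zero_iff.2 hdet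
  have hzero : (fun s => Ω s *ᵥ v) = 0 :=
    Matrix.ODE_solution_unique hA (hasDerivAt_fundamental_mulVec hΩ v) (fun s => by simp) hΩv
  exact hv0 (by simpa [hΩ0] using congrFun hzero 0)

theorem fundamental_add_period {T : ℝ} (hAper : ∀ t, A (t + T) = A t) (t : ℝ) :
    Ω (t + T) = Ω t * Ω T := by
  refine Matrix.ext_iff_mulVec.2 fun v => ?_
  have hshift : ∀ s, HasDerivAt (fun s => Ω (s + T) *ᵥ v) (A s *ᵥ (Ω (s + T) *ᵥ v)) s :=
    fun s => by
      simpa only [hAper] using (hasDerivAt_fundamental_mulVec hΩ v (s + T)).comp_add_const s T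
  rw [eq_fundamental_mulVec hA hΩ0 hΩ hshift t, zero_add, Matrix.mulVec_mulVec]

theorem adjoint_fundamental_add_period {T : ℝ} (hAper : ∀ t, A (t + T) = A t) {w : n → ℝ}
    (hw : (Ω T)ᵀ *ᵥ w = w) (t : ℝ) : (Ω (t + T))⁻¹ᵀ *ᵥ w = (Ω t)⁻¹ᵀ *ᵥ w := by
  have hwT : (Ω T)⁻¹ᵀ *ᵥ w = w := by
    rw [Matrix.transpose_nonsing_inv]
    exact Matrix.inv_mulVec_eq_self
      (by rw [Matrix.det_transpose]; exact isUnit_det_fundamental hA hΩ0 hΩ T) hw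
  rw [fundamental_add_period hA hΩ0 hΩ hAper, Matrix.mul_inv_rev, Matrix.transpose_mul,
    ← Matrix.mulVec_mulVec, hwT]

theorem hasDerivAt_adjoint_fundamental (w : n → ℝ) (t : ℝ) :
    HasDerivAt (fun s => (Ω s)⁻¹ᵀ *ᵥ w) (-((A t)ᵀ *ᵥ ((Ω t)⁻¹ᵀ *ᵥ w))) t := by
  have hdet := isUnit_det_fundamental hA hΩ0 hΩ t
  convert Matrix.hasDerivAt_mulVec (Ω := fun s => (Ω s)⁻¹ᵀ)
    (B := (-(Ω t)⁻¹ * (A t * Ω t) * (Ω t)⁻¹)ᵀ)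
    (fun i j => Matrix.hasDerivAt_inv (hΩ t) hdet j i) w using 1
  rw [Matrix.mul_assoc, Matrix.mul_assoc (A t), Matrix.mul_nonsing_inv _ hdet, Matrix.mul_one]
  simp [Matrix.transpose_mul, Matrix.mulVec_mulVec, Matrix.neg_mulVec]

end FundamentalMatrix

theorem adjoint_periodic_solution_normalized_general
    (m : ℕ)
    (A : ℝ → Matrix (Fin m) (Fin m) ℝ)
    (hAcont : ∀ i j : Fin m, Continuous fun t : ℝ => A t i j)
    (T : ℝ)
    (hAper : ∀ t : ℝ, A (t + T) = A t)
    (q : ℝ → Fin m → ℝ)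
    (hq : ∀ (t : ℝ) (i : Fin m),
      HasDerivAt (fun s : ℝ => q s i) ((A t).mulVec (q t) i) t)
    (hqper : ∀ t : ℝ, q (t + T) = q t)
    (hqne : ∃ t : ℝ, q t ≠ 0)
    (Ω : ℝ → Matrix (Fin m) (Fin m) ℝ)
    (hΩ0 : Ω 0 = 1)
    (hΩ : ∀ (t : ℝ) (i j : Fin m),
      HasDerivAt (fun s : ℝ => Ω s i j) ((A t * Ω t) i j) t)
    (hmono : (Matrix.charpoly (Ω T)).rootMultiplicity 1 = 1) :
    ∃ p : ℝ → Fin m → ℝ,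
      (∀ (t : ℝ) (i : Fin m),
        HasDerivAt (fun s : ℝ => p s i) (-((A t).transpose.mulVec (p t) i)) t) ∧
      (∀ t : ℝ, p (t + T) = p t) ∧
      (∀ t : ℝ, ∑ i : Fin m, p t i * q t i = 1) := by
  have hA : Continuous A := continuous_matrix hAcont
  have hqΩ : ∀ t, q t = Ω t *ᵥ q 0 :=
    eq_fundamental_mulVec hA hΩ0 hΩ fun t => hasDerivAt_pi.2 (hq t)
  have hq0 : q 0 ≠ 0 := fun h0 => by
    obtain ⟨t, ht⟩ := hqne
    exact ht (by rw [hqΩ t, h0, Matrix.mulVec_zero])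
  have hMq : Ω T *ᵥ q 0 = (1 : ℝ) • q 0 := by rw [one_smul, ← hqΩ, ← zero_add T, hqper]
  obtain ⟨w, hw, hwq⟩ :=
    Matrix.exists_transpose_mulVec_eq_smul_and_dotProduct_eq_one hMq hq0 hmono
  rw [one_smul] at hw
  refine ⟨fun t => (Ω t)⁻¹ᵀ *ᵥ w,
    fun t => hasDerivAt_pi.1 (hasDerivAt_adjoint_fundamental hA hΩ0 hΩ w t),
    adjoint_fundamental_add_period hA hΩ0 hΩ hAper hw, fun t => ?_⟩
  change (Ω t)⁻¹ᵀ *ᵥ w ⬝ᵥ q t = 1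
  rw [hqΩ t, Matrix.inv_transpose_mulVec_dotProduct_mulVec (isUnit_det_fundamental hA hΩ0 hΩ t),
    hwq]

/-- If the `T`-periodic linear system `dz/dt = A(t) z` has a nonzero
`T`-periodic solution `q` and the monodromy matrix has eigenvalue `1` with algebraic
multiplicity one, then the adjoint system `dp/dt = −A(t)ᵀ p` has a `T`-periodic solution
`p` normalized so that `p(t)ᵀ q(t) = 1` for all `t`. -/
theorem adjoint_periodic_solution_normalized
    (m : ℕ)
    (A : ℝ → Matrix (Fin m) (Fin m) ℝ)
    (hAcont : ∀ i j : Fin m, Continuous fun t : ℝ => A t i j)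
    (T : ℝ) (hT : 0 < T)
    (hAper : ∀ t : ℝ, A (t + T) = A t)
    (q : ℝ → Fin m → ℝ)
    (hq : ∀ (t : ℝ) (i : Fin m),
      HasDerivAt (fun s : ℝ => q s i) ((A t).mulVec (q t) i) t)
    (hqper : ∀ t : ℝ, q (t + T) = q t)
    (hqne : ∃ t : ℝ, q t ≠ 0)
    (Ω : ℝ → Matrix (Fin m) (Fin m) ℝ)
    (hΩ0 : Ω 0 = 1)
    (hΩ : ∀ (t : ℝ) (i j : Fin m),
      HasDerivAt (fun s : ℝ => Ω s i j) ((A t * Ω t) i j) t)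
    (hmono : (Matrix.charpoly (Ω T)).rootMultiplicity 1 = 1) :
    ∃ p : ℝ → Fin m → ℝ,
      (∀ (t : ℝ) (i : Fin m),
        HasDerivAt (fun s : ℝ => p s i) (-((A t).transpose.mulVec (p t) i)) t) ∧
      (∀ t : ℝ, p (t + T) = p t) ∧
      (∀ t : ℝ, ∑ i : Fin m, p t i * q t i = 1) :=
  adjoint_periodic_solution_normalized_general m A hAcont T hAper q hq hqper hqne Ω hΩ0 hΩ hmono
end
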